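/- Fix p_I > 0, T > 0, and n ∈ {1,…,5}, and set k = 6 − n. Define N(λ) := p_I·( 2T − (T + n/(2λ))·Δg(k;λT) − g(k;λT)/(2λ) ) for λ > 0, where Δg(k;μ) = g(k;μ) − g(k−1;μ). Then λ ↦ N(λ) is differentiable on (0,∞) and its derivative at each λ > 0 equals p_I·( (n·Δg(k;λT) + g(k;λT))/(2λ²) − T·(T + n/(2λ))·exp(−λT)·(λT)^{k−1}/(k−1)! − (T/(2λ))·∑_{m=0}^{k−1} exp(−λT)·(λT)^m/m! ). -/

import Mathlib

/-!
Writing `M ∼ Poisson(μ)`, the truncated mean is `g(k;μ) = ∑_{j<k} P(M > j)`, and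
`d/dμ P(M ≤ j) = -p(j;μ)` because `d/dμ p(m;μ) = p(m-1;μ) - p(m;μ)` telescopes. Hence
`g'(k;μ) = P(M < k)` and `Δg'(k;μ) = p(k-1;μ)` for `k ≥ 1`; the formula for `N'(λ)` is then the
product, quotient and chain rules with `μ = λT`.
-/

open Real

noncomputable def truncMean (k : ℕ) (μ : ℝ) : ℝ :=
  ∑' m : ℕ, (min m k : ℝ) * (Real.exp (-μ) * μ ^ m / (m.factorial : ℝ))

open Finset Nat

noncomputable def poissonWeight (m : ℕ) (μ : ℝ) : ℝ :=
  Real.exp (-μ) * μ ^ m / (m.factorial : ℝ)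

/-- `P(M < k)` for `M ∼ Poisson(μ)`. -/
noncomputable def poissonProbLT (k : ℕ) (μ : ℝ) : ℝ :=
  ∑ m ∈ range k, poissonWeight m μ

theorem poissonProbLT_succ (k : ℕ) (μ : ℝ) :
    poissonProbLT (k + 1) μ = poissonProbLT k μ + poissonWeight k μ :=
  sum_range_succ _ _

theorem hasSum_poissonWeight (μ : ℝ) : HasSum (fun m => poissonWeight m μ) 1 := by
  have h := (NormedSpace.expSeries_div_hasSum_exp μ).mul_left (Real.exp (-μ))
  rw [← Real.exp_eq_exp_ℝ, ← Real.exp_add, neg_add_cancel, Real.exp_zero] at h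
  simpa only [poissonWeight, mul_div_assoc] using h

theorem hasSum_truncMean (k : ℕ) (μ : ℝ) :
    HasSum (fun m : ℕ => (min m k : ℝ) * poissonWeight m μ) (truncMean k μ) := by
  refine (((hasSum_poissonWeight μ).summable.mul_left (k : ℝ)).congr_cofinite ?_).hasSum
  rw [Nat.cofinite_eq_atTop, Filter.EventuallyEq, Filter.eventually_atTop]
  exact ⟨k, fun m hm => by rw [min_eq_right (by exact_mod_cast hm)]⟩

theorem hasSum_ite_lt_poissonWeight (k : ℕ) (μ : ℝ) :
    HasSum (fun m => if m < k then poissonWeight m μ else 0) (poissonProbLT k μ) := by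
  have h : HasSum (fun m => if m < k then poissonWeight m μ else 0)
      (∑ m ∈ range k, if m < k then poissonWeight m μ else 0) :=
    hasSum_sum_of_ne_finset_zero fun m hm => if_neg (by simpa using hm)
  rwa [sum_congr rfl fun m hm => if_pos (mem_range.1 hm)] at h

theorem truncMean_succ_sub (k : ℕ) (μ : ℝ) :
    truncMean (k + 1) μ - truncMean k μ = 1 - poissonProbLT (k + 1) μ := by
  refine ((hasSum_truncMean (k + 1) μ).sub (hasSum_truncMean k μ)).unique ?_
  convert (hasSum_poissonWeight μ).sub (hasSum_ite_lt_poissonWeight (k + 1) μ) using 1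
  funext m
  split_ifs with hm
  · rw [min_eq_left (by exact_mod_cast hm.le), min_eq_left (by exact_mod_cast Nat.lt_succ_iff.1 hm)]
    ring
  · rw [min_eq_right (by exact_mod_cast not_lt.1 hm),
      min_eq_right (by exact_mod_cast (not_lt.1 hm).trans' k.le_succ)]
    push_cast; ring

theorem truncMean_eq_sum (k : ℕ) (μ : ℝ) :
    truncMean k μ = ∑ j ∈ range k, (1 - poissonProbLT (j + 1) μ) := by
  calc truncMean k μ = truncMean k μ - truncMean 0 μ := by simp [truncMean]
    _ = ∑ j ∈ range k, (truncMean (j + 1) μ - truncMean j μ) :=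
      (sum_range_sub (truncMean · μ) k).symm
    _ = _ := sum_congr rfl fun j _ => truncMean_succ_sub j μ

theorem hasDerivAt_poissonWeight (m : ℕ) (μ : ℝ) :
    HasDerivAt (poissonWeight m)
      (Real.exp (-μ) * (m * μ ^ (m - 1)) / (m.factorial : ℝ) - poissonWeight m μ) μ :=
  (((hasDerivAt_neg μ).exp.mul (hasDerivAt_pow m μ)).div_const (m.factorial : ℝ)).congr_deriv
    (by unfold poissonWeight; ring)

theorem hasDerivAt_poissonWeight_succ (m : ℕ) (μ : ℝ) :
    HasDerivAt (poissonWeight (m + 1)) (poissonWeight m μ - poissonWeight (m + 1) μ) μ := by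
  refine (hasDerivAt_poissonWeight (m + 1) μ).congr_deriv ?_
  simp only [poissonWeight, Nat.add_sub_cancel, factorial_succ, cast_mul, cast_succ]
  field_simp

theorem hasDerivAt_poissonProbLT_succ (k : ℕ) (μ : ℝ) :
    HasDerivAt (poissonProbLT (k + 1)) (-poissonWeight k μ) μ := by
  induction k with
  | zero =>
    rw [show poissonProbLT 1 = poissonWeight 0 from funext fun x => sum_range_one _]
    simpa using hasDerivAt_poissonWeight 0 μ
  | succ k ih =>
    refine ((ih.add (hasDerivAt_poissonWeight_succ k μ)).congr_deriv ?_).congr_of_eventuallyEq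
      (.of_forall fun x => poissonProbLT_succ (k + 1) x)
    ring

theorem hasDerivAt_truncMean (k : ℕ) (μ : ℝ) :
    HasDerivAt (truncMean k) (poissonProbLT k μ) μ := by
  have h := HasDerivAt.fun_sum (u := range k) fun j _ =>
    (hasDerivAt_poissonProbLT_succ j μ).const_sub 1
  rw [show truncMean k = _ from funext (truncMean_eq_sum k)]
  simpa [poissonProbLT] using h

theorem increment_numerator_hasDerivAt_lambda_general
    (p_I T : ℝ)
    (n : ℕ) (hn5 : n ≤ 5) (k : ℕ) (hk : k = 6 - n) :
    ∀ lam : ℝ, 0 < lam →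
      HasDerivAt
        (fun l : ℝ => p_I * (2 * T
          - (T + (n : ℝ) / (2 * l)) * (truncMean k (l * T) - truncMean (k - 1) (l * T))
          - truncMean k (l * T) / (2 * l)))
        (p_I * (((n : ℝ) * (truncMean k (lam * T) - truncMean (k - 1) (lam * T))
              + truncMean k (lam * T)) / (2 * lam ^ 2)
          - T * (T + (n : ℝ) / (2 * lam))
              * (Real.exp (-(lam * T)) * (lam * T) ^ (k - 1) / ((k - 1).factorial : ℝ))
          - (T / (2 * lam))
              * ∑ m ∈ Finset.range k, Real.exp (-(lam * T)) * (lam * T) ^ m / (m.factorial : ℝ)))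
        lam := by
  intro lam hlam
  obtain ⟨j, rfl⟩ : ∃ j, k = j + 1 := ⟨5 - n, by omega⟩
  rw [Nat.add_sub_cancel]
  have hg (i : ℕ) : HasDerivAt (fun l => truncMean i (l * T)) (poissonProbLT i (lam * T) * T) lam :=
    (hasDerivAt_truncMean i (lam * T)).comp (h₂ := truncMean i) lam (hasDerivAt_mul_const T)
  have h2l : HasDerivAt (fun l : ℝ => 2 * l) 2 lam := by
    simpa using (hasDerivAt_id lam).const_mul (2 : ℝ)
  have hne : 2 * lam ≠ 0 := by positivity
  have hN := ((((hasDerivAt_const lam (n : ℝ)).div h2l hne).const_add T).mul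
    ((hg (j + 1)).sub (hg j)) |>.const_sub (2 * T) |>.sub ((hg (j + 1)).div h2l hne)).const_mul p_I
  refine hN.congr_deriv ?_
  rw [eq_sub_of_add_eq (poissonProbLT_succ j (lam * T)).symm]
  simp only [poissonProbLT, poissonWeight, Pi.sub_apply, Pi.div_apply]
  field_simp
  ring

/-- **Derivative formula (A.2) / Equation (8).** With `k = 6 − n` and
`N(λ) = p_I (2T − (T + n/(2λ)) Δg(k;λT) − g(k;λT)/(2λ))`, the map `λ ↦ N(λ)` is
differentiable on `(0,∞)` with derivative
`p_I ( (n Δg + g)/(2λ²) − T (T + n/(2λ)) e^{−λT}(λT)^{k−1}/(k−1)! − (T/(2λ)) P(M < k) )`. -/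
theorem increment_numerator_hasDerivAt_lambda
    (p_I T : ℝ) (hp : 0 < p_I) (hT : 0 < T)
    (n : ℕ) (hn1 : 1 ≤ n) (hn5 : n ≤ 5) (k : ℕ) (hk : k = 6 - n) :
    ∀ lam : ℝ, 0 < lam →
      HasDerivAt
        (fun l : ℝ => p_I * (2 * T
          - (T + (n : ℝ) / (2 * l)) * (truncMean k (l * T) - truncMean (k - 1) (l * T))
          - truncMean k (l * T) / (2 * l)))
        (p_I * (((n : ℝ) * (truncMean k (lam * T) - truncMean (k - 1) (lam * T))
              + truncMean k (lam * T)) / (2 * lam ^ 2)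
          - T * (T + (n : ℝ) / (2 * lam))
              * (Real.exp (-(lam * T)) * (lam * T) ^ (k - 1) / ((k - 1).factorial : ℝ))
          - (T / (2 * lam))
              * ∑ m ∈ Finset.range k, Real.exp (-(lam * T)) * (lam * T) ^ m / (m.factorial : ℝ)))
        lam :=
  increment_numerator_hasDerivAt_lambda_general p_I T n hn5 k hk
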